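/- arXiv:1805.08815 — 4 statements merged into one kernel-verified Lean document; each statement's English description precedes it below -/
import Mathlib

section
/- Let A be a real n×n matrix, B a real n×m matrix, and P a real n×n̂ matrix. There exist a real n̂×n̂ matrix Â and a real m×n̂ matrix Q such that A * P = P * Â − B * Q if and only if the column space of A * P is contained in the sum of the column space of P and the column space of B. -/
/-! Column-space inclusion `range C ≤ range M` means every column of `C` is `M` times some
vector, i.e. `C = M * X`; and `range M ⊔ range N` is the column space of the block matrix
`[M N]`. So the inclusion in the theorem says `A * P = P * X + B * Y`, which is the
factorization with `Â = X`, `Q = -Y`. -/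

namespace Matrix

variable {R : Type*} [CommSemiring R] {l m n k : Type*} [Fintype m] [Fintype n] [Fintype k]

theorem range_mulVecLin_le_iff_exists_eq_mul (C : Matrix l k R) (M : Matrix l m R) :
    LinearMap.range C.mulVecLin ≤ LinearMap.range M.mulVecLin ↔ ∃ X : Matrix m k R, C = M * X := by
  classical
  constructor
  · intro h
    have hcol : ∀ j, ∃ x, M *ᵥ x = C.col j := fun j => h ⟨Pi.single j 1, mulVec_single_one C j⟩
    choose x hx using hcol
    refine ⟨(of x)ᵀ, ext_of_mulVec_single fun j => ?_⟩
    rw [← mulVec_mulVec, mulVec_single_one, mulVec_single_one, col_transpose, ← hx]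
    rfl
  · rintro ⟨X, rfl⟩
    rw [mulVecLin_mul]
    exact LinearMap.range_comp_le_range _ _

theorem range_mulVecLin_fromCols (M : Matrix l m R) (N : Matrix l n R) :
    LinearMap.range (fromCols M N).mulVecLin =
      LinearMap.range M.mulVecLin ⊔ LinearMap.range N.mulVecLin := by
  simp only [range_mulVecLin, ← Submodule.span_union, ← Set.Sum.elim_range]
  congr 2
  ext (j | j) i <;> rfl

theorem range_mulVecLin_le_sup_iff_exists_eq_mul_add_mul (C : Matrix l k R) (M : Matrix l m R)
    (N : Matrix l n R) :
    LinearMap.range C.mulVecLin ≤ LinearMap.range M.mulVecLin ⊔ LinearMap.range N.mulVecLin ↔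
      ∃ (X : Matrix m k R) (Y : Matrix n k R), C = M * X + N * Y := by
  rw [← range_mulVecLin_fromCols, range_mulVecLin_le_iff_exists_eq_mul]
  constructor
  · rintro ⟨Z, rfl⟩
    exact ⟨Z.toRows₁, Z.toRows₂, by rw [← fromCols_mul_fromRows, fromRows_toRows]⟩
  · rintro ⟨X, Y, rfl⟩
    exact ⟨fromRows X Y, (fromCols_mul_fromRows M N X Y).symm⟩

end Matrix

/-- There exist `Â`, `Q` with `A * P = P * Â - B * Q` iff the column space of `A * P`
is contained in the sum of the column spaces of `P` and `B`. -/
theorem stmt_1 {n m nh : ℕ} (A : Matrix (Fin n) (Fin n) ℝ) (B : Matrix (Fin n) (Fin m) ℝ)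
    (P : Matrix (Fin n) (Fin nh) ℝ) :
    (∃ (Ahat : Matrix (Fin nh) (Fin nh) ℝ) (Q : Matrix (Fin m) (Fin nh) ℝ),
        A * P = P * Ahat - B * Q) ↔
      LinearMap.range (A * P).mulVecLin ≤
        LinearMap.range P.mulVecLin ⊔ LinearMap.range B.mulVecLin := by
  rw [Matrix.range_mulVecLin_le_sup_iff_exists_eq_mul_add_mul]
  constructor
  · rintro ⟨Ahat, Q, h⟩
    exact ⟨Ahat, -Q, by rw [h, Matrix.mul_neg, sub_eq_add_neg]⟩
  · rintro ⟨Ahat, Q, h⟩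
    exact ⟨Ahat, -Q, by rw [h, Matrix.mul_neg, sub_neg_eq_add]⟩
end

section
/- Let M̂ be a real symmetric positive definite n×n matrix, B a real n×m matrix such that Bᵀ M̂ B is invertible, P a real n×n̂ matrix, and B̂ a real n̂×m̂ matrix. Set R̃* = (Bᵀ M̂ B)⁻¹ Bᵀ M̂ P B̂. Then for every real m×m̂ matrix R and every v ∈ ℝ^{m̂}, ((B R̃* − P B̂) v)ᵀ M̂ ((B R̃* − P B̂) v) ≤ ((B R − P B̂) v)ᵀ M̂ ((B R − P B̂) v). In particular, R̃* minimizes ‖M̂^{1/2} (B R − P B̂)‖ over all R, where ‖·‖ is the induced 2-norm and M̂^{1/2} the positive definite square root of M̂. -/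
open Matrix

section
open scoped ComplexOrder

/-- The positive semidefinite square root of a positive semidefinite matrix
(removed from Mathlib; restored here with its old definition). -/
noncomputable def Matrix.PosSemidef.sqrt {n 𝕜 : Type*} [Fintype n] [RCLike 𝕜] [DecidableEq n]
    {A : Matrix n n 𝕜} (hA : A.PosSemidef) : Matrix n n 𝕜 :=
  (hA.1.eigenvectorUnitary : Matrix n n 𝕜) * diagonal ((↑) ∘ (√·) ∘ hA.1.eigenvalues) *
    (star (hA.1.eigenvectorUnitary : Matrix n n 𝕜))

end

/-- Euclidean (induced 2-norm) operator norm of a real matrix. -/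
noncomputable def l2OpNorm {m n : ℕ} (A : Matrix (Fin m) (Fin n) ℝ) : ℝ :=
  ‖LinearMap.toContinuousLinearMap (Matrix.toEuclideanLin A)‖

private lemma sqrt_transpose_aux {n : ℕ} {M : Matrix (Fin n) (Fin n) ℝ} (hM : M.PosSemidef) :
    (hM.sqrt)ᵀ = hM.sqrt := by
  unfold Matrix.PosSemidef.sqrt
  have h1 : star (hM.1.eigenvectorUnitary : Matrix (Fin n) (Fin n) ℝ)
      = (hM.1.eigenvectorUnitary : Matrix (Fin n) (Fin n) ℝ)ᵀ := by
    rw [Matrix.star_eq_conjTranspose, Matrix.conjTranspose_eq_transpose_of_trivial]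
  rw [h1, Matrix.transpose_mul, Matrix.transpose_mul, Matrix.transpose_transpose,
    Matrix.diagonal_transpose, Matrix.mul_assoc]

private lemma sqrt_mul_self_aux {n : ℕ} {M : Matrix (Fin n) (Fin n) ℝ} (hM : M.PosSemidef) :
    hM.sqrt * hM.sqrt = M := by
  unfold Matrix.PosSemidef.sqrt
  set U := (hM.1.eigenvectorUnitary : Matrix (Fin n) (Fin n) ℝ)
  have hU : star U * U = 1 := Unitary.coe_star_mul_self _
  have hD : diagonal ((↑) ∘ (√·) ∘ hM.1.eigenvalues) * diagonal ((↑) ∘ (√·) ∘ hM.1.eigenvalues)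
      = diagonal (RCLike.ofReal ∘ hM.1.eigenvalues : Fin n → ℝ) := by
    rw [Matrix.diagonal_mul_diagonal]
    congr 1; funext i
    simp [Real.mul_self_sqrt (hM.eigenvalues_nonneg i)]
  conv_rhs => rw [hM.1.spectral_theorem, Unitary.conjStarAlgAut_apply]
  calc U * diagonal ((↑) ∘ (√·) ∘ hM.1.eigenvalues) * star U *
        (U * diagonal ((↑) ∘ (√·) ∘ hM.1.eigenvalues) * star U)
      = U * (diagonal ((↑) ∘ (√·) ∘ hM.1.eigenvalues) * (star U * U) *
        diagonal ((↑) ∘ (√·) ∘ hM.1.eigenvalues)) * star U := by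
        simp only [Matrix.mul_assoc]
    _ = _ := by rw [hU, Matrix.mul_one, hD]

private lemma quad_le_aux {n : ℕ} (M : Matrix (Fin n) (Fin n) ℝ) (hMsym : M.IsSymm)
    (hM : M.PosSemidef) (e q : Fin n → ℝ) (h : q ⬝ᵥ M.mulVec e = 0) :
    e ⬝ᵥ M.mulVec e ≤ (e + q) ⬝ᵥ M.mulVec (e + q) := by
  have hsym : e ⬝ᵥ M.mulVec q = q ⬝ᵥ M.mulVec e := by
    rw [Matrix.dotProduct_mulVec, ← Matrix.mulVec_transpose, hMsym.eq, dotProduct_comm]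
  have hq : 0 ≤ q ⬝ᵥ M.mulVec q := by simpa using hM.dotProduct_mulVec_nonneg q
  have hexp : (e + q) ⬝ᵥ M.mulVec (e + q) = e ⬝ᵥ M.mulVec e + q ⬝ᵥ M.mulVec q := by
    rw [Matrix.mulVec_add, dotProduct_add, add_dotProduct, add_dotProduct, hsym, h]
    ring
  linarith

private lemma norm_apply_eq_aux {k n : ℕ} (A : Matrix (Fin k) (Fin n) ℝ)
    (x : EuclideanSpace ℝ (Fin n)) :
    ‖LinearMap.toContinuousLinearMap (Matrix.toEuclideanLin A) x‖
      = Real.sqrt (A.mulVec ((WithLp.equiv 2 _) x) ⬝ᵥ A.mulVec ((WithLp.equiv 2 _) x)) := by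
  rw [LinearMap.coe_toContinuousLinearMap', Matrix.toEuclideanLin_apply,
    EuclideanSpace.norm_eq]
  congr 1
  simp [dotProduct, sq]

private lemma l2_mono_aux {k n : ℕ} (A C : Matrix (Fin k) (Fin n) ℝ)
    (h : ∀ y : Fin n → ℝ, A.mulVec y ⬝ᵥ A.mulVec y ≤ C.mulVec y ⬝ᵥ C.mulVec y) :
    l2OpNorm A ≤ l2OpNorm C := by
  apply ContinuousLinearMap.opNorm_le_bound _ (norm_nonneg _)
  intro x
  calc ‖LinearMap.toContinuousLinearMap (Matrix.toEuclideanLin A) x‖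
      ≤ ‖LinearMap.toContinuousLinearMap (Matrix.toEuclideanLin C) x‖ := by
        rw [norm_apply_eq_aux, norm_apply_eq_aux]; exact Real.sqrt_le_sqrt (h _)
    _ ≤ l2OpNorm C * ‖x‖ := ContinuousLinearMap.le_opNorm _ x

private lemma sqrt_quad_aux {n k : ℕ} (M : Matrix (Fin n) (Fin n) ℝ) (hMpd : M.PosDef)
    (E : Matrix (Fin n) (Fin k) ℝ) (y : Fin k → ℝ) :
    ((hMpd.posSemidef.sqrt * E).mulVec y) ⬝ᵥ ((hMpd.posSemidef.sqrt * E).mulVec y)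
      = (E.mulVec y) ⬝ᵥ M.mulVec (E.mulVec y) := by
  set S := hMpd.posSemidef.sqrt
  have hS : Sᵀ = S := by
    exact sqrt_transpose_aux hMpd.posSemidef
  have hSS : S * S = M := sqrt_mul_self_aux hMpd.posSemidef
  rw [← Matrix.mulVec_mulVec, Matrix.dotProduct_mulVec (S.mulVec (E.mulVec y)),
    ← Matrix.mulVec_transpose, hS, Matrix.mulVec_mulVec, hSS, dotProduct_comm,
    Matrix.dotProduct_mulVec, ← Matrix.mulVec_transpose]

/-- `R̃* = (Bᵀ M̂ B)⁻¹ Bᵀ M̂ P B̂` minimizes the `M̂`-weighted quadratic form of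
`(B R − P B̂) v` over all `R`, and hence also `‖M̂^{1/2} (B R − P B̂)‖`. -/
theorem stmt_12 {n m nh mh : ℕ} (M : Matrix (Fin n) (Fin n) ℝ) (hMsym : M.IsSymm)
    (hMpd : M.PosDef) (B : Matrix (Fin n) (Fin m) ℝ)
    (hBMB : IsUnit (Bᵀ * M * B)) (P : Matrix (Fin n) (Fin nh) ℝ)
    (Bhat : Matrix (Fin nh) (Fin mh) ℝ) :
    (∀ (R : Matrix (Fin m) (Fin mh) ℝ) (v : Fin mh → ℝ),
        ((B * ((Bᵀ * M * B)⁻¹ * Bᵀ * M * P * Bhat) - P * Bhat).mulVec v) ⬝ᵥ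
            M.mulVec ((B * ((Bᵀ * M * B)⁻¹ * Bᵀ * M * P * Bhat) - P * Bhat).mulVec v) ≤
          ((B * R - P * Bhat).mulVec v) ⬝ᵥ
            M.mulVec ((B * R - P * Bhat).mulVec v)) ∧
    (∀ R : Matrix (Fin m) (Fin mh) ℝ,
        l2OpNorm (hMpd.posSemidef.sqrt *
            (B * ((Bᵀ * M * B)⁻¹ * Bᵀ * M * P * Bhat) - P * Bhat)) ≤
          l2OpNorm (hMpd.posSemidef.sqrt * (B * R - P * Bhat))) := by
  set Rs : Matrix (Fin m) (Fin mh) ℝ := (Bᵀ * M * B)⁻¹ * Bᵀ * M * P * Bhat with hRs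
  set E : Matrix (Fin n) (Fin mh) ℝ := B * Rs - P * Bhat with hE
  -- orthogonality
  have horth : Bᵀ * M * E = 0 := by
    have hd : IsUnit (Bᵀ * M * B).det := (Matrix.isUnit_iff_isUnit_det _).mp hBMB
    rw [hE, Matrix.mul_sub]
    have : Bᵀ * M * (B * Rs) = Bᵀ * M * (P * Bhat) := by
      calc Bᵀ * M * (B * Rs)
          = (Bᵀ * M * B) * ((Bᵀ * M * B)⁻¹ * (Bᵀ * M * P * Bhat)) := by
            rw [hRs]; simp only [Matrix.mul_assoc]
        _ = Bᵀ * M * (P * Bhat) := by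
            rw [← Matrix.mul_assoc, Matrix.mul_nonsing_inv _ hd, Matrix.one_mul,
              Matrix.mul_assoc, Matrix.mul_assoc]
    rw [this, sub_self]
  have key : ∀ (R : Matrix (Fin m) (Fin mh) ℝ) (v : Fin mh → ℝ),
      (E.mulVec v) ⬝ᵥ M.mulVec (E.mulVec v) ≤
        ((B * R - P * Bhat).mulVec v) ⬝ᵥ M.mulVec ((B * R - P * Bhat).mulVec v) := by
    intro R v
    have hdecomp : B * R - P * Bhat = E + B * (R - Rs) := by
      rw [hE, Matrix.mul_sub]; abel
    have hq0 : ((B * (R - Rs)).mulVec v) ⬝ᵥ M.mulVec (E.mulVec v) = 0 := by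
      have : ((B * (R - Rs)).mulVec v) ⬝ᵥ M.mulVec (E.mulVec v)
          = ((R - Rs).mulVec v) ⬝ᵥ (Bᵀ * M * E).mulVec v := by
        rw [Matrix.mul_assoc Bᵀ M E, ← Matrix.mulVec_mulVec v Bᵀ (M * E), ← Matrix.mulVec_mulVec v M E,
          Matrix.dotProduct_mulVec _ Bᵀ, Matrix.vecMul_transpose,
          Matrix.mulVec_mulVec v B (R - Rs)]
      rw [this, horth, Matrix.zero_mulVec, dotProduct_zero]
    have := quad_le_aux M hMsym hMpd.posSemidef (E.mulVec v) ((B * (R - Rs)).mulVec v) hq0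
    rwa [hdecomp, Matrix.add_mulVec]
  refine ⟨key, fun R => ?_⟩
  apply l2_mono_aux
  intro y
  rw [sqrt_quad_aux M hMpd, sqrt_quad_aux M hMpd]
  exact key R y
end

section
/- Let A, B, D, E, Z, W, P, Â, B̂, D̂, Ê, Ŵ, K, Q, R̃, L₁, L₂, F, F̂ be real matrices of compatible sizes satisfying D = Z W, A P = P Â − B Q, F P = F̂, E = P Ê + B (L₂ − L₁), and P D̂ = Z Ŵ. Let φ : ℝ × ℝ^l → ℝ^l be any function, and fix t ∈ ℝ, x ∈ ℝⁿ, x̂ ∈ ℝ^{n̂}, û ∈ ℝ^{m̂}, w ∈ ℝ^p, ŵ ∈ ℝ^{p̂}. Define the interface input u = K (x − P x̂) + Q x̂ + R̃ û + L₁ φ(t, F x) − L₂ φ(t, F̂ x̂). Then A x + B u + E φ(t, F x) + D w − P ( Â x̂ + B̂ û + Ê φ(t, F̂ x̂) + D̂ ŵ ) = (A + B K)(x − P x̂) + Z (W w − Ŵ ŵ) + (B R̃ − P B̂) û + (B L₁ + E) (φ(t, F x) − φ(t, F̂ x̂)). -/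
open Matrix

/-
The defect of the interface splits into four independent pieces — state, input, disturbance and
nonlinearity — and each piece collapses separately: the state part by the intertwining relation
`A P = P Â − B Q` (which absorbs the feedforward term `Q x̂`), the disturbance part by the common
factor `Z` of `D` and `P D̂`, and the nonlinear part by `E = P Ê + B (L₂ − L₁)`, after which the
nonlinearity enters only through the difference `φ(t, F x) − φ(t, F̂ x̂)`.
-/

namespace Matrix

variable {R : Type*} [Ring R] {ι ι' κ μ ν : Type*} [Fintype ι'] [Fintype κ]

theorem mulVec_interface_state [Fintype ι] {A : Matrix ι ι R} {B : Matrix ι κ R}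
    {P : Matrix ι ι' R} {Ahat : Matrix ι' ι' R} {Q : Matrix κ ι' R} (K : Matrix κ ι R)
    (hA : A * P = P * Ahat - B * Q) (x : ι → R) (xhat : ι' → R) :
    A *ᵥ x + B *ᵥ (K *ᵥ (x - P *ᵥ xhat) + Q *ᵥ xhat) - P *ᵥ (Ahat *ᵥ xhat) =
      (A + B * K) *ᵥ (x - P *ᵥ xhat) := by
  have hPA : P *ᵥ (Ahat *ᵥ xhat) = A *ᵥ (P *ᵥ xhat) + B *ᵥ (Q *ᵥ xhat) := by
    simp only [mulVec_mulVec, hA, sub_mulVec, sub_add_cancel]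
  simp only [hPA, add_mulVec, mulVec_add, mulVec_sub, ← mulVec_mulVec]
  abel

theorem mulVec_interface_disturbance [Fintype μ] [Fintype ν] {D : Matrix ι μ R}
    {Z : Matrix ι κ R} {W : Matrix κ μ R} {P : Matrix ι ι' R}
    {Dhat : Matrix ι' ν R} {What : Matrix κ ν R}
    (hD : D = Z * W) (hDhat : P * Dhat = Z * What) (w : μ → R) (what : ν → R) :
    D *ᵥ w - P *ᵥ (Dhat *ᵥ what) = Z *ᵥ (W *ᵥ w - What *ᵥ what) := by
  rw [mulVec_mulVec, hD, hDhat, mulVec_sub, mulVec_mulVec, mulVec_mulVec]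

theorem mulVec_interface_nonlinearity [Fintype μ] {B : Matrix ι κ R} {E : Matrix ι μ R}
    {P : Matrix ι ι' R} {Ehat : Matrix ι' μ R} {L1 L2 : Matrix κ μ R}
    (hE : E = P * Ehat + B * (L2 - L1)) (y yhat : μ → R) :
    B *ᵥ (L1 *ᵥ y - L2 *ᵥ yhat) + E *ᵥ y - P *ᵥ (Ehat *ᵥ yhat) =
      (B * L1 + E) *ᵥ (y - yhat) := by
  simp only [hE, add_mulVec, sub_mulVec, mulVec_sub, ← mulVec_mulVec]
  abel

end Matrix

theorem stmt_15_general {n m p l nh mh ph p' : ℕ}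
    (A : Matrix (Fin n) (Fin n) ℝ) (B : Matrix (Fin n) (Fin m) ℝ)
    (D : Matrix (Fin n) (Fin p) ℝ) (E : Matrix (Fin n) (Fin l) ℝ)
    (Z : Matrix (Fin n) (Fin p') ℝ) (W : Matrix (Fin p') (Fin p) ℝ)
    (P : Matrix (Fin n) (Fin nh) ℝ) (Ahat : Matrix (Fin nh) (Fin nh) ℝ)
    (Bhat : Matrix (Fin nh) (Fin mh) ℝ) (Dhat : Matrix (Fin nh) (Fin ph) ℝ)
    (Ehat : Matrix (Fin nh) (Fin l) ℝ) (What : Matrix (Fin p') (Fin ph) ℝ)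
    (K : Matrix (Fin m) (Fin n) ℝ) (Q : Matrix (Fin m) (Fin nh) ℝ)
    (Rt : Matrix (Fin m) (Fin mh) ℝ) (L1 L2 : Matrix (Fin m) (Fin l) ℝ)
    (F : Matrix (Fin l) (Fin n) ℝ) (Fhat : Matrix (Fin l) (Fin nh) ℝ)
    (hD : D = Z * W) (hA : A * P = P * Ahat - B * Q)
    (hE : E = P * Ehat + B * (L2 - L1)) (hDhat : P * Dhat = Z * What)
    (φ : ℝ → (Fin l → ℝ) → (Fin l → ℝ))
    (t : ℝ) (x : Fin n → ℝ) (xhat : Fin nh → ℝ) (uhat : Fin mh → ℝ)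
    (w : Fin p → ℝ) (what : Fin ph → ℝ) :
    A.mulVec x +
        B.mulVec (K.mulVec (x - P.mulVec xhat) + Q.mulVec xhat + Rt.mulVec uhat +
          L1.mulVec (φ t (F.mulVec x)) - L2.mulVec (φ t (Fhat.mulVec xhat))) +
        E.mulVec (φ t (F.mulVec x)) + D.mulVec w -
        P.mulVec (Ahat.mulVec xhat + Bhat.mulVec uhat +
          Ehat.mulVec (φ t (Fhat.mulVec xhat)) + Dhat.mulVec what) =
      (A + B * K).mulVec (x - P.mulVec xhat) +
        Z.mulVec (W.mulVec w - What.mulVec what) +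
        (B * Rt - P * Bhat).mulVec uhat +
        (B * L1 + E).mulVec (φ t (F.mulVec x) - φ t (Fhat.mulVec xhat)) := by
  rw [← mulVec_interface_state K hA, ← mulVec_interface_disturbance hD hDhat,
    ← mulVec_interface_nonlinearity hE]
  simp only [mulVec_add, mulVec_sub, sub_mulVec, ← mulVec_mulVec]
  abel

/-- Algebraic error-dynamics identity for the interface input
`u = K (x − P x̂) + Q x̂ + R̃ û + L₁ φ(t,Fx) − L₂ φ(t,F̂x̂)`. -/
theorem stmt_15 {n m p l nh mh ph p' : ℕ}
    (A : Matrix (Fin n) (Fin n) ℝ) (B : Matrix (Fin n) (Fin m) ℝ)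
    (D : Matrix (Fin n) (Fin p) ℝ) (E : Matrix (Fin n) (Fin l) ℝ)
    (Z : Matrix (Fin n) (Fin p') ℝ) (W : Matrix (Fin p') (Fin p) ℝ)
    (P : Matrix (Fin n) (Fin nh) ℝ) (Ahat : Matrix (Fin nh) (Fin nh) ℝ)
    (Bhat : Matrix (Fin nh) (Fin mh) ℝ) (Dhat : Matrix (Fin nh) (Fin ph) ℝ)
    (Ehat : Matrix (Fin nh) (Fin l) ℝ) (What : Matrix (Fin p') (Fin ph) ℝ)
    (K : Matrix (Fin m) (Fin n) ℝ) (Q : Matrix (Fin m) (Fin nh) ℝ)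
    (Rt : Matrix (Fin m) (Fin mh) ℝ) (L1 L2 : Matrix (Fin m) (Fin l) ℝ)
    (F : Matrix (Fin l) (Fin n) ℝ) (Fhat : Matrix (Fin l) (Fin nh) ℝ)
    (hD : D = Z * W) (hA : A * P = P * Ahat - B * Q) (hF : F * P = Fhat)
    (hE : E = P * Ehat + B * (L2 - L1)) (hDhat : P * Dhat = Z * What)
    (φ : ℝ → (Fin l → ℝ) → (Fin l → ℝ))
    (t : ℝ) (x : Fin n → ℝ) (xhat : Fin nh → ℝ) (uhat : Fin mh → ℝ)
    (w : Fin p → ℝ) (what : Fin ph → ℝ) :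
    A.mulVec x +
        B.mulVec (K.mulVec (x - P.mulVec xhat) + Q.mulVec xhat + Rt.mulVec uhat +
          L1.mulVec (φ t (F.mulVec x)) - L2.mulVec (φ t (Fhat.mulVec xhat))) +
        E.mulVec (φ t (F.mulVec x)) + D.mulVec w -
        P.mulVec (Ahat.mulVec xhat + Bhat.mulVec uhat +
          Ehat.mulVec (φ t (Fhat.mulVec xhat)) + Dhat.mulVec what) =
      (A + B * K).mulVec (x - P.mulVec xhat) +
        Z.mulVec (W.mulVec w - What.mulVec what) +
        (B * Rt - P * Bhat).mulVec uhat +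
        (B * L1 + E).mulVec (φ t (F.mulVec x) - φ t (Fhat.mulVec xhat)) :=
  stmt_15_general A B D E Z W P Ahat Bhat Dhat Ehat What K Q Rt L1 L2 F Fhat hD hA hE hDhat φ t x
    xhat uhat w what
end

section
/- Let A, B, E, P, Â, Ê, Q, L₁, L₂, K, F, F̂ be real matrices of compatible sizes satisfying A P = P Â − B Q, F P = F̂, and E = P Ê + B (L₂ − L₁), and let φ : ℝ × ℝ^l → ℝ^l be continuous. Suppose ξ̂ : [0, ∞) → ℝ^{n̂} is differentiable and satisfies the ODE ξ̂′(t) = Â ξ̂(t) + Ê φ(t, F̂ ξ̂(t)) for all t ≥ 0. Define ξ(t) = P ξ̂(t) and u(t) = K (ξ(t) − P ξ̂(t)) + Q ξ̂(t) + L₁ φ(t, F ξ(t)) − L₂ φ(t, F̂ ξ̂(t)). Then ξ is differentiable and satisfies ξ′(t) = A ξ(t) + B u(t) + E φ(t, F ξ(t)) for all t ≥ 0. In particular, the set { (x, x̂) : x = P x̂ } is invariant for the interconnection of the two (noise-free) systems under the interface u. -/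
open Matrix

theorem HasDerivAt.matrix_mulVec {𝕜 ι κ : Type*} [NontriviallyNormedField 𝕜] [CompleteSpace 𝕜]
    [Fintype ι] [Fintype κ] (M : Matrix κ ι 𝕜) {f : 𝕜 → ι → 𝕜} {f' : ι → 𝕜} {t : 𝕜}
    (hf : HasDerivAt f f' t) : HasDerivAt (fun s => M *ᵥ f s) (M *ᵥ f') t :=
  (mulVecLin M).toContinuousLinearMap.hasFDerivAt.comp_hasDerivAt t hf

/-- The argument of `B` is the interface input at `x = P x̂`, where its `K`-term vanishes. -/
theorem mulVec_interface_eq {R ι ι' κ ν : Type*} [Ring R] [Fintype ι] [Fintype ι'] [Fintype κ]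
    [Fintype ν] {A : Matrix ι ι R} {B : Matrix ι κ R} {E : Matrix ι ν R} {P : Matrix ι ι' R}
    {Ahat : Matrix ι' ι' R} {Ehat : Matrix ι' ν R} {Q : Matrix κ ι' R} {L1 L2 : Matrix κ ν R}
    (hA : A * P = P * Ahat - B * Q) (hE : E = P * Ehat + B * (L2 - L1)) (x : ι' → R)
    (w : ν → R) :
    A *ᵥ (P *ᵥ x) + B *ᵥ (Q *ᵥ x + L1 *ᵥ w - L2 *ᵥ w) + E *ᵥ w =
      P *ᵥ (Ahat *ᵥ x + Ehat *ᵥ w) := by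
  rw [mulVec_mulVec, hA, hE]
  simp only [sub_mulVec, add_mulVec, mulVec_add, mulVec_sub, ← mulVec_mulVec]
  abel

theorem stmt_16_general {n m l nh : ℕ}
    (A : Matrix (Fin n) (Fin n) ℝ) (B : Matrix (Fin n) (Fin m) ℝ)
    (E : Matrix (Fin n) (Fin l) ℝ) (P : Matrix (Fin n) (Fin nh) ℝ)
    (Ahat : Matrix (Fin nh) (Fin nh) ℝ) (Ehat : Matrix (Fin nh) (Fin l) ℝ)
    (Q : Matrix (Fin m) (Fin nh) ℝ) (L1 L2 : Matrix (Fin m) (Fin l) ℝ)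
    (K : Matrix (Fin m) (Fin n) ℝ)
    (F : Matrix (Fin l) (Fin n) ℝ) (Fhat : Matrix (Fin l) (Fin nh) ℝ)
    (hA : A * P = P * Ahat - B * Q) (hF : F * P = Fhat)
    (hE : E = P * Ehat + B * (L2 - L1))
    (φ : ℝ → (Fin l → ℝ) → (Fin l → ℝ))
    (ξhat : ℝ → (Fin nh → ℝ))
    (hξhat : ∀ t : ℝ, 0 ≤ t →
      HasDerivAt ξhat (Ahat.mulVec (ξhat t) + Ehat.mulVec (φ t (Fhat.mulVec (ξhat t)))) t)
    (ξ : ℝ → (Fin n → ℝ)) (hξ : ∀ t, ξ t = P.mulVec (ξhat t))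
    (u : ℝ → (Fin m → ℝ))
    (hu : ∀ t, u t = K.mulVec (ξ t - P.mulVec (ξhat t)) + Q.mulVec (ξhat t) +
      L1.mulVec (φ t (F.mulVec (ξ t))) - L2.mulVec (φ t (Fhat.mulVec (ξhat t)))) :
    ∀ t : ℝ, 0 ≤ t →
      HasDerivAt ξ
        (A.mulVec (ξ t) + B.mulVec (u t) + E.mulVec (φ t (F.mulVec (ξ t)))) t := by
  intro t ht
  have hFξ : F *ᵥ ξ t = Fhat *ᵥ ξhat t := by rw [hξ, mulVec_mulVec, hF]
  rw [hu, hFξ, hξ, sub_self, mulVec_zero, zero_add, mulVec_interface_eq hA hE]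
  exact ((hξhat t ht).matrix_mulVec P).congr_of_eventuallyEq (.of_forall hξ)

/-- If `ξ̂` solves the abstract ODE, then `ξ = P ξ̂` solves the concrete ODE under the
interface input; i.e. the set `{(x, x̂) : x = P x̂}` is invariant. -/
theorem stmt_16 {n m l nh : ℕ}
    (A : Matrix (Fin n) (Fin n) ℝ) (B : Matrix (Fin n) (Fin m) ℝ)
    (E : Matrix (Fin n) (Fin l) ℝ) (P : Matrix (Fin n) (Fin nh) ℝ)
    (Ahat : Matrix (Fin nh) (Fin nh) ℝ) (Ehat : Matrix (Fin nh) (Fin l) ℝ)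
    (Q : Matrix (Fin m) (Fin nh) ℝ) (L1 L2 : Matrix (Fin m) (Fin l) ℝ)
    (K : Matrix (Fin m) (Fin n) ℝ)
    (F : Matrix (Fin l) (Fin n) ℝ) (Fhat : Matrix (Fin l) (Fin nh) ℝ)
    (hA : A * P = P * Ahat - B * Q) (hF : F * P = Fhat)
    (hE : E = P * Ehat + B * (L2 - L1))
    (φ : ℝ → (Fin l → ℝ) → (Fin l → ℝ))
    (hφ : Continuous fun q : ℝ × (Fin l → ℝ) => φ q.1 q.2)
    (ξhat : ℝ → (Fin nh → ℝ))
    (hξhat : ∀ t : ℝ, 0 ≤ t →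
      HasDerivAt ξhat (Ahat.mulVec (ξhat t) + Ehat.mulVec (φ t (Fhat.mulVec (ξhat t)))) t)
    (ξ : ℝ → (Fin n → ℝ)) (hξ : ∀ t, ξ t = P.mulVec (ξhat t))
    (u : ℝ → (Fin m → ℝ))
    (hu : ∀ t, u t = K.mulVec (ξ t - P.mulVec (ξhat t)) + Q.mulVec (ξhat t) +
      L1.mulVec (φ t (F.mulVec (ξ t))) - L2.mulVec (φ t (Fhat.mulVec (ξhat t)))) :
    ∀ t : ℝ, 0 ≤ t →
      HasDerivAt ξ
        (A.mulVec (ξ t) + B.mulVec (u t) + E.mulVec (φ t (F.mulVec (ξ t)))) t :=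
  stmt_16_general A B E P Ahat Ehat Q L1 L2 K F Fhat hA hF hE φ ξhat hξhat ξ hξ u hu
end
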